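/- arXiv:1710.06106 — 5 statements merged into one kernel-verified Lean document; each statement's English description precedes it below -/
import Mathlib

section
/- Let X be a topological space, s an equivalence relation (setoid) on X whose natural map π : X → Quotient s is a closed map (i.e. the decomposition is upper semicontinuous), and G : X → X a map satisfying condition (*). If G is a closed map, then the induced map H : Quotient s → Quotient s, H ⟦x⟧ = ⟦G x⟧, is a closed map (with respect to the quotient topology). -/
theorem stmt4_general {X : Type*} [TopologicalSpace X] (s : Setoid X)
    (hπ : IsClosedMap (Quotient.mk s : X → Quotient s))
    (G : X → X)
    (hG : IsClosedMap G)
    (H : Quotient s → Quotient s)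
    (hH : ∀ x : X, H (Quotient.mk s x) = Quotient.mk s (G x)) :
    IsClosedMap H := by
  have hcomm : H ∘ Quotient.mk s = Quotient.mk s ∘ G := funext hH
  refine .of_comp_surjective Quotient.mk_surjective continuous_quotient_mk' ?_
  rw [hcomm]
  exact hπ.comp hG

/-- If the natural map `π : X → Quotient s` is closed (the
decomposition is usc), `G : X → X` satisfies condition (*) and is a closed map,
then the induced map `H` on the decomposition space (with the quotient
topology) is a closed map. -/
theorem stmt4 {X : Type*} [TopologicalSpace X] (s : Setoid X)
    (hπ : IsClosedMap (Quotient.mk s : X → Quotient s))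
    (G : X → X)
    (hstar : ∀ x : X, G '' {y | s.r y x} = {z | s.r z (G x)})
    (hG : IsClosedMap G)
    (H : Quotient s → Quotient s)
    (hH : ∀ x : X, H (Quotient.mk s x) = Quotient.mk s (G x)) :
    IsClosedMap H :=
  stmt4_general s hπ G hG H hH
end

section
/- Let X be a topological space, s an equivalence relation (setoid) on X, and G : X → X a map satisfying condition (*). If G is topologically transitive and its set of periodic points Per(G) is dense in X, then the induced map H : Quotient s → Quotient s, H ⟦x⟧ = ⟦G x⟧, is topologically transitive and its set of periodic points Per(H) is dense in the decomposition space Quotient s (with the quotient topology). -/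
/-!
The quotient map `π : X → Quotient s` is a continuous surjection with `π ∘ G = H ∘ π`, so `H` is a
topological factor of `G`. Both properties pass to factors along a continuous map with dense range:
pulling back nonempty open sets along `π` transfers transitivity, and `π` maps periodic points of
`G` to periodic points of `H`, so the image of the dense set `Per(G)` is a dense subset of `Per(H)`.
-/

open Function Set

def IsTopologicallyTransitive {α : Type*} [TopologicalSpace α] (f : α → α) : Prop :=
  ∀ U V : Set α, IsOpen U → IsOpen V → U.Nonempty → V.Nonempty → ∃ n > 0, (f^[n] '' U ∩ V).Nonempty

namespace Function.Semiconj

variable {α β : Type*} [TopologicalSpace α] [TopologicalSpace β] {π : α → β} {f : α → α}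
  {g : β → β}

theorem isTopologicallyTransitive (h : Semiconj π f g) (hπ : Continuous π)
    (hπd : DenseRange π) (hf : IsTopologicallyTransitive f) : IsTopologicallyTransitive g := by
  intro U V hU hV hUne hVne
  obtain ⟨n, hn, y, ⟨x, hxU, rfl⟩, hyV⟩ := hf (π ⁻¹' U) (π ⁻¹' V) (hU.preimage hπ)
    (hV.preimage hπ) (hπd.exists_mem_open hU hUne) (hπd.exists_mem_open hV hVne)
  exact ⟨n, hn, π (f^[n] x), ⟨π x, hxU, (h.iterate_right n x).symm⟩, hyV⟩

theorem dense_periodicPts (h : Semiconj π f g) (hπ : Continuous π) (hπd : DenseRange π)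
    (hf : Dense (periodicPts f)) : Dense (periodicPts g) :=
  (hπd.dense_image hπ hf).mono h.mapsTo_periodicPts.image_subset

end Function.Semiconj

theorem stmt6_general {X : Type*} [TopologicalSpace X] (s : Setoid X) (G : X → X)
    (H : Quotient s → Quotient s)
    (hH : ∀ x : X, H (Quotient.mk s x) = Quotient.mk s (G x))
    (hGtrans : ∀ U V : Set X, IsOpen U → IsOpen V → U.Nonempty → V.Nonempty →
      ∃ n > 0, (G^[n] '' U ∩ V).Nonempty)
    (hGper : Dense {x : X | ∃ n > 0, G^[n] x = x}) :
    (∀ U V : Set (Quotient s), IsOpen U → IsOpen V → U.Nonempty → V.Nonempty →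
      ∃ n > 0, (H^[n] '' U ∩ V).Nonempty) ∧
    Dense {q : Quotient s | ∃ n > 0, H^[n] q = q} := by
  have hsemiconj : Semiconj (Quotient.mk s) G H := fun x => (hH x).symm
  have hdense : DenseRange (Quotient.mk s) := Quotient.mk_surjective.denseRange
  exact ⟨hsemiconj.isTopologicallyTransitive continuous_quotient_mk' hdense hGtrans,
    hsemiconj.dense_periodicPts continuous_quotient_mk' hdense hGper⟩

/-- If `G : X → X` satisfies condition (*), is topologically
transitive, and has a dense set of periodic points, then the induced map `H` on
the decomposition space (with the quotient topology) is topologically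
transitive and has a dense set of periodic points. -/
theorem stmt6 {X : Type*} [TopologicalSpace X] (s : Setoid X) (G : X → X)
    (hstar : ∀ x : X, G '' {y | s.r y x} = {z | s.r z (G x)})
    (H : Quotient s → Quotient s)
    (hH : ∀ x : X, H (Quotient.mk s x) = Quotient.mk s (G x))
    (hGtrans : ∀ U V : Set X, IsOpen U → IsOpen V → U.Nonempty → V.Nonempty →
      ∃ n > 0, (G^[n] '' U ∩ V).Nonempty)
    (hGper : Dense {x : X | ∃ n > 0, G^[n] x = x}) :
    (∀ U V : Set (Quotient s), IsOpen U → IsOpen V → U.Nonempty → V.Nonempty →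
      ∃ n > 0, (H^[n] '' U ∩ V).Nonempty) ∧
    Dense {q : Quotient s | ∃ n > 0, H^[n] q = q} :=
  stmt6_general s G H hH hGtrans hGper
end

section
/- The map C : Σ → Σ defined by (C ψ)(i) = xor (ψ 0) (ψ (i+1)) is a continuous surjection of the symbolic space Σ that is not injective, is topologically transitive, and has a dense set of periodic points (hence C is chaotic on Σ). -/
/-- The map `C` on the symbolic space `Σ = ℕ → Bool`: the shift if the first
symbol is `0` (`false`), the bit-flipped shift if the first symbol is `1`
(`true`). -/
def Cmap : (ℕ → Bool) → (ℕ → Bool) := fun ψ i => xor (ψ 0) (ψ (i + 1))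

/-!
By induction, `C^[k+1] ψ` is the tail of `ψ` after position `k`, flipped when `ψ k = 1`.
So `C^[N+1]` maps every cylinder of length `N + 1` onto all of `Σ`, which gives transitivity.
Gluing a cylinder `x|[0,N]` to its own `C^[N+1]`-preimage yields a block of length `2N + 2`
ending in `0`; its periodic repetition is a fixed point of `C^[2N+2]` in that cylinder.
-/

open Function PiNat TopologicalSpace

theorem continuous_Cmap : Continuous Cmap :=
  continuous_pi fun i => continuous_of_discreteTopology.comp₂
    (g := fun p : Bool × Bool => xor p.1 p.2) (continuous_apply 0) (continuous_apply (i + 1))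

theorem surjective_Cmap : Surjective Cmap := fun η =>
  ⟨Nat.rec (motive := fun _ => Bool) false fun i _ => η i, funext fun i => Bool.false_xor (η i)⟩

theorem Cmap_not (ψ : ℕ → Bool) : Cmap (fun i => !ψ i) = Cmap ψ :=
  funext fun i => Bool.not_xor_not (ψ 0) (ψ (i + 1))

theorem not_injective_Cmap : ¬ Injective Cmap := fun h =>
  Bool.not_ne_self false (congrFun (h (Cmap_not fun _ => false)) 0)

theorem Cmap_iterate_succ_apply (k : ℕ) (ψ : ℕ → Bool) (i : ℕ) :
    Cmap^[k + 1] ψ i = xor (ψ k) (ψ (k + 1 + i)) := by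
  induction k generalizing i with
  | zero => rw [zero_add, add_comm]; rfl
  | succ k ih =>
    rw [iterate_succ_apply', Cmap, ih, ih, add_zero, show k + 1 + (i + 1) = k + 1 + 1 + i by omega]
    cases ψ k <;> simp

theorem exists_mem_cylinder_Cmap_iterate_eq (u v : ℕ → Bool) (N : ℕ) :
    ∃ ψ ∈ cylinder u (N + 1), Cmap^[N + 1] ψ = v := by
  refine ⟨fun j => if j ≤ N then u j else xor (u N) (v (j - (N + 1))), fun i hi => ?_, ?_⟩
  · simp [Nat.le_of_lt_succ hi]
  · funext i
    simp [Cmap_iterate_succ_apply, show ¬ N + 1 + i ≤ N by omega]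

theorem Cmap_iterate_eq_self {φ : ℕ → Bool} {k : ℕ} (hper : ∀ i, φ (k + 1 + i) = φ i)
    (hk : φ k = false) : Cmap^[k + 1] φ = φ :=
  funext fun i => by rw [Cmap_iterate_succ_apply, hk, hper, Bool.false_xor]

theorem exists_mem_cylinder_Cmap_iterate_eq_self (x : ℕ → Bool) (N : ℕ) :
    ∃ φ ∈ cylinder x (N + 1), Cmap^[2 * N + 2] φ = φ := by
  obtain ⟨ψ, hψx, hψ⟩ := exists_mem_cylinder_Cmap_iterate_eq x x N
  have hψ_last : ψ (2 * N + 1) = false := by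
    have := congrFun hψ N
    rw [Cmap_iterate_succ_apply, hψx N N.lt_succ_self, show N + 1 + N = 2 * N + 1 by omega] at this
    simpa using congrArg (xor (x N)) this
  refine ⟨fun j => ψ (j % (2 * N + 2)), fun i hi => ?_, Cmap_iterate_eq_self ?_ ?_⟩
  · simp only [Nat.mod_eq_of_lt (by omega : i < 2 * N + 2)]
    exact hψx i hi
  · intro i
    simp
  · simpa [Nat.mod_eq_of_lt] using hψ_last

theorem exists_cylinder_subset {E : ℕ → Type*} [∀ n, TopologicalSpace (E n)]
    [∀ n, DiscreteTopology (E n)] {U : Set (∀ n, E n)} (hU : IsOpen U) {x : ∀ n, E n}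
    (hx : x ∈ U) :
    ∃ N, cylinder x (N + 1) ⊆ U := by
  obtain ⟨_, ⟨y, n, rfl⟩, hxy, hyU⟩ :=
    (isTopologicalBasis_cylinders _).exists_subset_of_mem_open hx hU
  exact ⟨n, (cylinder_anti x n.le_succ).trans (mem_cylinder_iff_eq.1 hxy ▸ hyU)⟩

/-- `C` is a continuous surjection of the symbolic space
`ℕ → Bool` (with the product topology, `Bool` discrete) that is not injective,
is topologically transitive, and has a dense set of periodic points (hence `C`
is chaotic). -/
theorem stmt10 :
    Continuous Cmap ∧ Function.Surjective Cmap ∧ ¬ Function.Injective Cmap ∧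
    (∀ U V : Set (ℕ → Bool), IsOpen U → IsOpen V → U.Nonempty → V.Nonempty →
      ∃ n > 0, (Cmap^[n] '' U ∩ V).Nonempty) ∧
    Dense {ψ : ℕ → Bool | ∃ n > 0, Cmap^[n] ψ = ψ} := by
  refine ⟨continuous_Cmap, surjective_Cmap, not_injective_Cmap, ?_, ?_⟩
  · rintro U V hU - ⟨u, hu⟩ ⟨v, hv⟩
    obtain ⟨N, hNU⟩ := exists_cylinder_subset hU hu
    obtain ⟨ψ, hψ, hψv⟩ := exists_mem_cylinder_Cmap_iterate_eq u v N
    exact ⟨N + 1, N.succ_pos, v, ⟨ψ, hNU hψ, hψv⟩, hv⟩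
  · refine dense_iff_inter_open.2 fun U hU ⟨x, hx⟩ => ?_
    obtain ⟨N, hNU⟩ := exists_cylinder_subset hU hx
    obtain ⟨φ, hφ, hφ_per⟩ := exists_mem_cylinder_Cmap_iterate_eq_self x N
    exact ⟨φ, hNU hφ, 2 * N + 2, by omega, hφ_per⟩
end

section
/- For every y ∈ [0,1], the image under C of the fiber f⁻¹({y}) equals the fiber f⁻¹({T y}): C '' (f⁻¹ {y}) = f⁻¹ {T y}. In particular, C maps every element of the fiber decomposition 𝒟_f = {f⁻¹({y}) | y ∈ [0,1]} of Σ onto an element of 𝒟_f, i.e. C satisfies condition (*) with respect to 𝒟_f. -/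
/-- The binary-expansion map `f : Σ → ℝ`, `f ψ = ∑_{i=0}^∞ ψ(i)/2^(i+1)`. -/
noncomputable def binExp (ψ : ℕ → Bool) : ℝ :=
  ∑' i : ℕ, (if ψ i then (1 : ℝ) else 0) / 2 ^ (i + 1)

/-- The tent map `T : ℝ → ℝ`. -/
noncomputable def tent (x : ℝ) : ℝ := if x ≤ 1 / 2 then 2 * x else 2 * (1 - x)

/-!
`f` semiconjugates `C` to the tent map: writing `ψ = b :: φ`, we have `f ψ = b/2 + f φ / 2`,
and `C ψ` is `φ` or its bitwise complement according to `b`, while complementing every bit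
sends `f φ` to `1 - f φ`. Hence `f (C ψ) = T (f ψ)`, which gives `C '' f⁻¹{y} ⊆ f⁻¹{T y}`;
conversely a preimage of `φ` under `C` in the fiber over `y` is obtained by prepending the
bit `y > 1/2` to `φ`, complemented when that bit is `1`.
-/

lemma binExp_summable (ψ : ℕ → Bool) :
    Summable fun i => (if ψ i then (1 : ℝ) else 0) / 2 ^ (i + 1) := by
  refine summable_geometric_two.of_nonneg_of_le (fun i => by positivity) fun i => ?_
  rw [one_div_pow, pow_succ]
  split_ifs <;> norm_num [div_mul_eq_div_div]

lemma binExp_nonneg (ψ : ℕ → Bool) : 0 ≤ binExp ψ :=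
  tsum_nonneg fun _ => by positivity

lemma binExp_not (ψ : ℕ → Bool) : binExp (fun i => !ψ i) = 1 - binExp ψ := by
  have h : binExp (fun i => !ψ i) + binExp ψ = ∑' i : ℕ, 1 / 2 / 2 ^ i := by
    rw [binExp, binExp, ← (binExp_summable _).tsum_add (binExp_summable _)]
    congr 1 with i
    cases ψ i <;> simp [pow_succ, div_eq_mul_inv, mul_comm]
  rw [tsum_geometric_two'] at h
  linarith

lemma binExp_le_one (ψ : ℕ → Bool) : binExp ψ ≤ 1 := by
  linarith [binExp_not ψ, binExp_nonneg fun i => !ψ i]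

lemma binExp_eq_head_add_tail (ψ : ℕ → Bool) :
    binExp ψ = (if ψ 0 then 1 / 2 else 0) + binExp (fun i => ψ (i + 1)) / 2 := by
  rw [binExp, (binExp_summable ψ).tsum_eq_zero_add, binExp, ← tsum_div_const]
  congr 1
  · split_ifs <;> norm_num
  · congr 1 with i
    rw [pow_succ, div_div]

lemma binExp_Cmap (ψ : ℕ → Bool) :
    binExp (Cmap ψ) =
      if ψ 0 then 1 - binExp (fun i => ψ (i + 1)) else binExp (fun i => ψ (i + 1)) := by
  rw [show Cmap ψ = fun i => xor (ψ 0) (ψ (i + 1)) from rfl]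
  cases ψ 0 <;> simp [← binExp_not]

theorem tent_binExp (ψ : ℕ → Bool) : tent (binExp ψ) = binExp (Cmap ψ) := by
  have h0 := binExp_nonneg fun i => ψ (i + 1)
  have h1 := binExp_le_one fun i => ψ (i + 1)
  rw [binExp_Cmap, binExp_eq_head_add_tail, tent]
  split_ifs <;> linarith

/-- for every `y ∈ [0,1]`, the image under `C` of the fiber
`f⁻¹({y})` equals the fiber `f⁻¹({T y})`; in particular `C` maps every element
of the fiber decomposition `𝒟_f` of the symbolic space onto an element of
`𝒟_f`, i.e. `C` satisfies condition (*) with respect to `𝒟_f`. -/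
theorem stmt14 :
    ∀ y ∈ Set.Icc (0 : ℝ) 1,
      Cmap '' (binExp ⁻¹' {y}) = binExp ⁻¹' {tent y} := by
  intro y _
  ext φ
  constructor
  · rintro ⟨ψ, rfl, rfl⟩
    exact (tent_binExp ψ).symm
  · intro hφ
    rw [Set.mem_preimage, Set.mem_singleton_iff, tent] at hφ
    by_cases hy : y ≤ 1 / 2
    · refine ⟨fun | 0 => false | n + 1 => φ n, ?_, funext fun i => by simp [Cmap]⟩
      rw [Set.mem_preimage, Set.mem_singleton_iff, binExp_eq_head_add_tail,
        if_neg Bool.false_ne_true, hφ, if_pos hy]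
      ring
    · refine ⟨fun | 0 => true | n + 1 => !φ n, ?_, funext fun i => by simp [Cmap]⟩
      rw [Set.mem_preimage, Set.mem_singleton_iff, binExp_eq_head_add_tail,
        if_pos rfl, binExp_not, hφ, if_neg hy]
      ring
end

section
/- Let X be a T₁ topological space with no isolated points (a perfect T₁-space), and let f : X → X be any map. If f has a dense orbit, i.e. there exists x₀ ∈ X such that the closure of O⁺(x₀) = {f^[n] x₀ | n ≥ 0} equals X, then f is topologically transitive. -/
/-! In a perfect T₁-space a dense set stays dense after removing a point, so removing the
starting point from a dense orbit of `x` leaves a dense orbit of `f x`; hence every tail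
`{f^[n] x₀ | n ≥ m}` of a dense orbit is dense. Pick `f^[m] x₀ ∈ U`; then some later point
`f^[k] (f^[m + 1] x₀) = f^[k + 1] (f^[m] x₀)` of the orbit lies in `V`. -/

open Set Filter Topology Function

section

variable {X : Type*} [TopologicalSpace X] [T1Space X] {f : X → X} {x : X}

theorem Dense.range_iterate_apply [NeBot (𝓝[≠] x)] (h : Dense (range fun n : ℕ => f^[n] x)) :
    Dense (range fun n : ℕ => f^[n] (f x)) := by
  refine (h.sdiff_singleton x).mono ?_
  rintro _ ⟨⟨_ | n, rfl⟩, hne⟩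
  · exact absurd rfl hne
  · exact ⟨n, (iterate_succ_apply f n x).symm⟩

theorem Dense.range_iterate_iterate_apply [∀ x : X, NeBot (𝓝[≠] x)]
    (h : Dense (range fun n : ℕ => f^[n] x)) (m : ℕ) :
    Dense (range fun n : ℕ => f^[n] (f^[m] x)) := by
  induction m with
  | zero => exact h
  | succ m ih => simpa only [iterate_succ_apply'] using ih.range_iterate_apply

end

/-- in a T₁ space with no isolated points (a perfect T₁-space),
any map with a dense orbit is topologically transitive. -/
theorem stmt19 {X : Type*} [TopologicalSpace X] [T1Space X]
    (hperf : ∀ x : X, ¬ IsOpen ({x} : Set X))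
    (f : X → X) (x₀ : X)
    (hdense : Dense (Set.range fun n : ℕ => f^[n] x₀)) :
    ∀ U V : Set X, IsOpen U → IsOpen V → U.Nonempty → V.Nonempty →
      ∃ n > 0, (f^[n] '' U ∩ V).Nonempty := by
  have : ∀ x : X, NeBot (𝓝[≠] x) := fun x =>
    ⟨fun h => hperf x ((isOpen_singleton_iff_punctured_nhds x).2 h)⟩
  intro U V hU hV hUne hVne
  obtain ⟨_, hyU, m, rfl⟩ := hdense.inter_open_nonempty U hU hUne
  obtain ⟨_, hzV, k, rfl⟩ :=
    (hdense.range_iterate_iterate_apply (m + 1)).inter_open_nonempty V hV hVne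
  refine ⟨k + 1, k.succ_pos, _, ⟨_, hyU, rfl⟩, ?_⟩
  rwa [iterate_succ_apply, ← iterate_succ_apply' f m]
end
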